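/- arXiv:0801.4097 — 2 statements merged into one kernel-verified Lean document; each statement's English description precedes it below -/
import Mathlib

section
/- In the abstract framework setting (see context): suppose (1) the trial space approximation property ‖u − Π_r u‖_U ≤ ε(r)‖u‖_Ũ holds for all u ∈ Ũ, (2) the stability condition ‖ΛLu_r‖_T ≤ β(s)‖π_sΛLu_r‖_{T_s} holds for all u_r ∈ U_r, and (3) the numerical method approximation property ‖π_sΛ(Lu*_{r,s} − f)‖_{T_s} ≤ C‖π_sΛL‖_{U→T_s} ε(r)‖u*‖_Ũ holds, where f = Lu*. Then ‖u* − u*_{r,s}‖_U ≤ (1 + β(s)‖(ΛL)^{−1}‖_{T→U}‖π_sΛL‖_{U→T_s}(1 + C)) ε(r) ‖u*‖_Ũ. -/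
noncomputable section

/-- **Theorem (error bound of Schaback's framework).**
Abstract setting: `U`, `F`, `T` Banach spaces; `L : U → F` and `Λ : F → T` continuous
bijective linear operators, with bounded inverse `M = (ΛL)⁻¹ : T → U`; `Ut` (the regularity
subspace `Ũ`) a normed space with a continuous injective linear inclusion `ι : Ũ → U`;
`S = U_r ⊆ Ũ` a finite-dimensional trial subspace with projector `Π : Ũ → U_r`;
`Ts = T_s` a finite-dimensional normed space with bounded linear test discretization
`πs : T → T_s`; `u* ∈ Ũ` the exact solution (`f = Lu*`) and `u*_{r,s} ∈ U_r` the
approximate solution.  If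
(1) `‖u − Πu‖_U ≤ ε ‖u‖_Ũ` for all `u ∈ Ũ` (trial space approximation property),
(2) `‖ΛLu_r‖_T ≤ β ‖π_sΛLu_r‖_{T_s}` for all `u_r ∈ U_r` (stability condition), and
(3) `‖π_sΛ(Lu*_{r,s} − f)‖_{T_s} ≤ C ‖π_sΛL‖ ε ‖u*‖_Ũ` (numerical method approximation),
then `‖u* − u*_{r,s}‖_U ≤ (1 + β ‖(ΛL)⁻¹‖ ‖π_sΛL‖ (1 + C)) ε ‖u*‖_Ũ`. -/
theorem framework_error_bound
    {U F T Ut Ts : Type*}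
    [NormedAddCommGroup U] [NormedSpace ℝ U] [CompleteSpace U]
    [NormedAddCommGroup F] [NormedSpace ℝ F] [CompleteSpace F]
    [NormedAddCommGroup T] [NormedSpace ℝ T] [CompleteSpace T]
    [NormedAddCommGroup Ut] [NormedSpace ℝ Ut]
    [NormedAddCommGroup Ts] [NormedSpace ℝ Ts] [FiniteDimensional ℝ Ts]
    (L : U →L[ℝ] F) (hL : Function.Bijective L)
    (Λ : F →L[ℝ] T) (hΛ : Function.Bijective Λ)
    (ι : Ut →L[ℝ] U) (hι : Function.Injective ι)
    (M : T →L[ℝ] U) (hM₁ : ∀ u : U, M (Λ (L u)) = u) (hM₂ : ∀ t : T, Λ (L (M t)) = t)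
    (S : Submodule ℝ Ut) [FiniteDimensional ℝ S]
    (P : Ut →ₗ[ℝ] Ut) (hP : ∀ u : Ut, P u ∈ S)
    (πs : T →L[ℝ] Ts)
    (ε β C : ℝ) (hε : 0 < ε) (hβ : 0 < β) (hC : 0 < C)
    (ustar urs : Ut) (hurs : urs ∈ S)
    (h1 : ∀ u : Ut, ‖ι u - ι (P u)‖ ≤ ε * ‖u‖)
    (h2 : ∀ ur : Ut, ur ∈ S → ‖Λ (L (ι ur))‖ ≤ β * ‖πs (Λ (L (ι ur)))‖)
    (h3 : ‖πs (Λ (L (ι urs) - L (ι ustar)))‖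
      ≤ C * ‖πs.comp (Λ.comp L)‖ * ε * ‖ustar‖) :
    ‖ι ustar - ι urs‖
      ≤ (1 + β * ‖M‖ * ‖πs.comp (Λ.comp L)‖ * (1 + C)) * ε * ‖ustar‖ := by
  set K := ‖πs.comp (Λ.comp L)‖ with hK
  have hK0 : 0 ≤ K := norm_nonneg _
  set w : Ut := P ustar - urs with hw
  have hwS : w ∈ S := S.sub_mem (hP ustar) hurs
  -- bound on the test-side of w
  have hApply : ∀ x : U, (πs.comp (Λ.comp L)) x = πs (Λ (L x)) := fun x => rfl
  have hsplit : πs (Λ (L (ι w)))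
      = πs (Λ (L (ι (P ustar) - ι ustar))) - πs (Λ (L (ι urs) - L (ι ustar))) := by
    have : ι w = (ι (P ustar) - ι ustar) - (ι urs - ι ustar) := by
      simp [hw, map_sub]
    rw [this]
    simp [map_sub]
  have hterm1 : ‖πs (Λ (L (ι (P ustar) - ι ustar)))‖ ≤ K * (ε * ‖ustar‖) := by
    have := (πs.comp (Λ.comp L)).le_opNorm (ι (P ustar) - ι ustar)
    rw [hApply] at this
    refine this.trans ?_
    have h1' : ‖ι (P ustar) - ι ustar‖ ≤ ε * ‖ustar‖ := by
      rw [norm_sub_rev]; exact h1 ustar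
    exact mul_le_mul_of_nonneg_left h1' hK0
  have htest : ‖πs (Λ (L (ι w)))‖ ≤ (1 + C) * K * (ε * ‖ustar‖) := by
    rw [hsplit]
    refine (norm_sub_le _ _).trans ?_
    have := h3
    calc ‖πs (Λ (L (ι (P ustar) - ι ustar)))‖ + ‖πs (Λ (L (ι urs) - L (ι ustar)))‖
        ≤ K * (ε * ‖ustar‖) + C * K * ε * ‖ustar‖ := add_le_add hterm1 h3
      _ = (1 + C) * K * (ε * ‖ustar‖) := by ring
  -- bound on w itself
  have hwbound : ‖ι w‖ ≤ β * ‖M‖ * K * (1 + C) * (ε * ‖ustar‖) := by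
    have h0 : ι w = M (Λ (L (ι w))) := (hM₁ (ι w)).symm
    calc ‖ι w‖ = ‖M (Λ (L (ι w)))‖ := by rw [← h0]
      _ ≤ ‖M‖ * ‖Λ (L (ι w))‖ := M.le_opNorm _
      _ ≤ ‖M‖ * (β * ‖πs (Λ (L (ι w)))‖) :=
          mul_le_mul_of_nonneg_left (h2 w hwS) (norm_nonneg _)
      _ ≤ ‖M‖ * (β * ((1 + C) * K * (ε * ‖ustar‖))) := by
          apply mul_le_mul_of_nonneg_left _ (norm_nonneg _)
          exact mul_le_mul_of_nonneg_left htest hβ.le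
      _ = β * ‖M‖ * K * (1 + C) * (ε * ‖ustar‖) := by ring
  -- combine
  have hsplit2 : ι ustar - ι urs = (ι ustar - ι (P ustar)) + ι w := by
    simp [hw, map_sub]
  calc ‖ι ustar - ι urs‖
      ≤ ‖ι ustar - ι (P ustar)‖ + ‖ι w‖ := by rw [hsplit2]; exact norm_add_le _ _
    _ ≤ ε * ‖ustar‖ + β * ‖M‖ * K * (1 + C) * (ε * ‖ustar‖) :=
        add_le_add (h1 ustar) hwbound
    _ = (1 + β * ‖M‖ * K * (1 + C)) * ε * ‖ustar‖ := by ring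

end
end

section
/- In the abstract framework setting (see context), let T̃ := ΛLŨ be equipped with a norm making ΛL : Ũ → T̃ bounded. Suppose (1) the inverse estimate ‖u_r‖_Ũ ≤ γ(r)‖u_r‖_U holds for all u_r ∈ U_r, (2) the sampling inequality ‖f‖_T ≤ C(α(s)‖f‖_T̃ + β(s)‖π_s f‖_{T_s}) holds for all f ∈ T̃, and (3) the test discretization is fine enough: C·α(s)·γ(r)·‖ΛL‖_{Ũ→T̃}·‖(ΛL)^{−1}‖_{T→U} ≤ 1/2. Then the stability condition holds with stability factor 2Cβ(s), i.e. ‖ΛLu_r‖_T ≤ 2Cβ(s)‖π_sΛLu_r‖_{T_s} for all u_r ∈ U_r. -/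
noncomputable section

/-- **Proposition (stability of the test discretization via a sampling inequality).**
Abstract setting: `U`, `F`, `T` Banach spaces; `L : U → F` and `Λ : F → T` continuous
bijective linear operators, with bounded inverse `M = (ΛL)⁻¹ : T → U`; `Ut` (the
regularity subspace `Ũ`) a normed space with a continuous injective linear inclusion
`ι : Ũ → U`; `Tt` (the space `T̃ = ΛLŨ`) a normed space with linear inclusion `j : T̃ → T`
and `G = ΛL : Ũ → T̃` satisfying `j (G u) = Λ(L(ι u))` and bounded with norm constant `N`
(`N = ‖ΛL‖_{Ũ→T̃}`); `S = U_r ⊆ Ũ` a finite-dimensional trial subspace; `Ts = T_s` a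
finite-dimensional normed space with bounded linear test discretization `πs : T → T_s`.
Suppose
(1) the inverse estimate `‖u_r‖_Ũ ≤ γ ‖u_r‖_U` for all `u_r ∈ U_r`,
(2) the sampling inequality `‖f‖_T ≤ C(α ‖f‖_T̃ + β ‖π_s f‖_{T_s})` for all `f ∈ T̃`, and
(3) the fine-enough-test-discretization condition `C α γ N ‖(ΛL)⁻¹‖ ≤ 1/2`.
Then the stability condition holds with stability factor `2Cβ`:
`‖ΛLu_r‖_T ≤ 2Cβ ‖π_sΛLu_r‖_{T_s}` for all `u_r ∈ U_r`. -/
theorem stability_via_sampling_inequality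
    {U F T Ut Tt Ts : Type*}
    [NormedAddCommGroup U] [NormedSpace ℝ U] [CompleteSpace U]
    [NormedAddCommGroup F] [NormedSpace ℝ F] [CompleteSpace F]
    [NormedAddCommGroup T] [NormedSpace ℝ T] [CompleteSpace T]
    [NormedAddCommGroup Ut] [NormedSpace ℝ Ut]
    [NormedAddCommGroup Tt] [NormedSpace ℝ Tt]
    [NormedAddCommGroup Ts] [NormedSpace ℝ Ts] [FiniteDimensional ℝ Ts]
    (L : U →L[ℝ] F) (hL : Function.Bijective L)
    (Λ : F →L[ℝ] T) (hΛ : Function.Bijective Λ)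
    (ι : Ut →L[ℝ] U) (hι : Function.Injective ι)
    (M : T →L[ℝ] U) (hM₁ : ∀ u : U, M (Λ (L u)) = u) (hM₂ : ∀ t : T, Λ (L (M t)) = t)
    (j : Tt →ₗ[ℝ] T) (hj : Function.Injective j)
    (G : Ut →ₗ[ℝ] Tt) (hGj : ∀ u : Ut, j (G u) = Λ (L (ι u)))
    (hGsurj : Function.Surjective G)
    (N : ℝ) (hN : ∀ u : Ut, ‖G u‖ ≤ N * ‖u‖)
    (S : Submodule ℝ Ut) [FiniteDimensional ℝ S]
    (πs : T →L[ℝ] Ts)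
    (α β γ C : ℝ) (hα : 0 < α) (hβ : 0 < β) (hγ : 0 < γ) (hC : 0 < C)
    (h1 : ∀ ur : Ut, ur ∈ S → ‖ur‖ ≤ γ * ‖ι ur‖)
    (h2 : ∀ f : Tt, ‖j f‖ ≤ C * (α * ‖f‖ + β * ‖πs (j f)‖))
    (h3 : C * α * γ * N * ‖M‖ ≤ 1 / 2) :
    ∀ ur : Ut, ur ∈ S → ‖Λ (L (ι ur))‖ ≤ 2 * C * β * ‖πs (Λ (L (ι ur)))‖ := by
  intro ur hur
  rcases eq_or_ne ur 0 with rfl | hur0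
  · simp
  have hurpos : 0 < ‖ur‖ := norm_pos_iff.mpr hur0
  have hN0 : 0 ≤ N := by nlinarith [hN ur, norm_nonneg (G ur)]
  set f := G ur with hf
  have hjf : j f = Λ (L (ι ur)) := hGj ur
  rw [← hjf]
  have hMjf : M (j f) = ι ur := by rw [hjf]; exact hM₁ (ι ur)
  have hchain : ‖f‖ ≤ γ * N * ‖M‖ * ‖j f‖ := by
    calc ‖f‖ ≤ N * ‖ur‖ := hN ur
      _ ≤ N * (γ * ‖ι ur‖) := mul_le_mul_of_nonneg_left (h1 ur hur) hN0
      _ = γ * N * ‖M (j f)‖ := by rw [hMjf]; ring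
      _ ≤ γ * N * (‖M‖ * ‖j f‖) :=
          mul_le_mul_of_nonneg_left (M.le_opNorm (j f)) (by positivity)
      _ = γ * N * ‖M‖ * ‖j f‖ := by ring
  have h2f := h2 f
  have key : ‖j f‖ ≤ 1/2 * ‖j f‖ + C * β * ‖πs (j f)‖ := by
    have h5 : C * α * ‖f‖ ≤ C * α * (γ * N * ‖M‖ * ‖j f‖) :=
      mul_le_mul_of_nonneg_left hchain (by positivity)
    have h4 : C * α * (γ * N * ‖M‖ * ‖j f‖) ≤ 1/2 * ‖j f‖ := by
      nlinarith [norm_nonneg (j f), h3]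
    nlinarith [h2f]
  nlinarith [key, norm_nonneg (πs (j f))]

end
end
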